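/- Let φ, η : (0,∞) → ℝ be smooth functions, let v(x) := φ(|x|) x₂/|x| for x ∈ ℝ² \ {0}, and let A(x) := η(|x|) J, where J is the 2×2 matrix with rows (0,1) and (-1,0). Then for every x ≠ 0, div(A ∇v)(x) = η'(|x|) φ(|x|) x₁/|x|². -/

import Mathlib

open Set

noncomputable section

/-- Euclidean space `ℝⁿ`. -/
abbrev E (n : ℕ) : Type := EuclideanSpace ℝ (Fin n)

/-- The `i`-th coordinate direction. -/
def es {n : ℕ} (i : Fin n) : E n := EuclideanSpace.single i 1

/-- The partial derivative `∂ᵢ f (x)`. -/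
def pd {n : ℕ} (i : Fin n) (f : E n → ℝ) (x : E n) : ℝ := fderiv ℝ f x (es i)

open scoped RealInnerProductSpace in
theorem hasFDerivAt_norm' (y : E 2) (hy : y ≠ 0) :
    HasFDerivAt (fun z : E 2 => ‖z‖) (‖y‖⁻¹ • innerSL ℝ y) y := by
  have h0 : (⟪y, y⟫) ≠ 0 := by
    rw [real_inner_self_eq_norm_sq]
    exact pow_ne_zero 2 (norm_ne_zero_iff.mpr hy)
  have h1 : HasFDerivAt (fun z : E 2 => ⟪z, z⟫)
      ((fderivInnerCLM ℝ (id y, y)).comp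
        ((ContinuousLinearMap.id ℝ (E 2)).prod (ContinuousLinearMap.id ℝ (E 2)))) y :=
    (hasFDerivAt_id y).inner ℝ (hasFDerivAt_id y)
  have h2 := HasDerivAt.comp_hasFDerivAt (f := fun z : E 2 => ⟪z, z⟫) y
    (Real.hasDerivAt_sqrt h0) h1
  have hfun : ((fun t => Real.sqrt t) ∘ fun z : E 2 => ⟪z, z⟫) = fun z : E 2 => ‖z‖ := by
    funext z
    simp only [Function.comp_apply]
    rw [real_inner_self_eq_norm_sq, Real.sqrt_sq (norm_nonneg z)]
  have hn : ‖y‖ ≠ 0 := norm_ne_zero_iff.mpr hy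
  have hCLM : ((1 / (2 * Real.sqrt ((fun z : E 2 => ⟪z, z⟫) y))) •
      (fderivInnerCLM ℝ (id y, y)).comp
        ((ContinuousLinearMap.id ℝ (E 2)).prod (ContinuousLinearMap.id ℝ (E 2))))
      = ‖y‖⁻¹ • innerSL ℝ y := by
    apply ContinuousLinearMap.ext
    intro w
    simp only [ContinuousLinearMap.smul_apply, innerSL_apply_apply, ContinuousLinearMap.coe_comp',
      Function.comp_apply, ContinuousLinearMap.prod_apply, ContinuousLinearMap.coe_id', id_eq,
      fderivInnerCLM_apply, smul_eq_mul]
    rw [real_inner_self_eq_norm_sq, Real.sqrt_sq (norm_nonneg y), real_inner_comm w y]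
    field_simp
    ring
  rw [hfun, hCLM] at h2
  exact h2

theorem pdf_formula (φ : ℝ → ℝ) (hφ : ContDiffOn ℝ (⊤ : ℕ∞) φ (Ioi 0)) (y : E 2) (hy : y ≠ 0)
    (j : Fin 2) :
    pd j (fun z : E 2 => φ ‖z‖ * (z 1 / ‖z‖)) y =
      deriv φ ‖y‖ * y j * y 1 / ‖y‖ ^ 2 + φ ‖y‖ * (es j 1) / ‖y‖
        - φ ‖y‖ * y 1 * y j / ‖y‖ ^ 3 := by
  have hn : ‖y‖ ≠ 0 := norm_ne_zero_iff.mpr hy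
  have hr : (0:ℝ) < ‖y‖ := norm_pos_iff.mpr hy
  have N := hasFDerivAt_norm' y hy
  have hφd : HasDerivAt φ (deriv φ ‖y‖) ‖y‖ :=
    ((hφ.contDiffAt (Ioi_mem_nhds hr)).differentiableAt (by simp)).hasDerivAt
  have h1 : HasFDerivAt (fun z : E 2 => φ ‖z‖)
      (deriv φ ‖y‖ • (‖y‖⁻¹ • innerSL ℝ y)) y := hφd.comp_hasFDerivAt y N
  have h3 : HasFDerivAt (fun z : E 2 => z 1) (EuclideanSpace.proj (𝕜 := ℝ) 1) y :=
    (EuclideanSpace.proj 1 : E 2 →L[ℝ] ℝ).hasFDerivAt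
  have h2 : HasFDerivAt (fun z : E 2 => ‖z‖⁻¹) ((-(‖y‖^2)⁻¹) • (‖y‖⁻¹ • innerSL ℝ y)) y :=
    (hasDerivAt_inv hn).comp_hasFDerivAt y N
  have h5 := h1.mul (h3.mul h2)
  rw [pd]
  simp only [div_eq_mul_inv]
  rw [HasFDerivAt.fderiv (f := fun z : E 2 => φ ‖z‖ * (z 1 * ‖z‖⁻¹)) h5]
  have hinner : innerSL ℝ y (es j) = y j := by
    simp [es, EuclideanSpace.inner_single_right, real_inner_comm]
  have hproj : (EuclideanSpace.proj (𝕜 := ℝ) (1 : Fin 2)) (es j) = es j 1 := rfl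
  simp only [ContinuousLinearMap.add_apply, ContinuousLinearMap.smul_apply,
    ContinuousLinearMap.coe_smul', Pi.smul_apply, innerSL_apply_apply, smul_eq_mul, hinner, hproj]
  fin_cases j <;> simp [es, EuclideanSpace.single_apply] <;> field_simp <;> ring

/-- **Divergence of the rotational corrector.** For smooth `φ, η` on `(0,∞)`,
`v(x) = φ(|x|) x₂/|x|` and `A(x) = η(|x|) J` with `J = [[0,1],[-1,0]]`, one has
`div(A ∇v)(x) = η'(|x|) φ(|x|) x₁/|x|²` for every `x ≠ 0`. -/
theorem corrector_divergence (φ η : ℝ → ℝ)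
    (hφ : ContDiffOn ℝ (⊤ : ℕ∞) φ (Ioi 0))
    (hη : ContDiffOn ℝ (⊤ : ℕ∞) η (Ioi 0)) :
    ∀ x : E 2, x ≠ 0 →
      (∑ i, pd i
          (fun y => ∑ j, η ‖y‖ * ((!![(0:ℝ), 1; -1, 0]) i j) *
            pd j (fun z : E 2 => φ ‖z‖ * (z 1 / ‖z‖)) y) x) =
        deriv η ‖x‖ * φ ‖x‖ * x 0 / ‖x‖ ^ 2 := by
  intro x hx
  have hn : ‖x‖ ≠ 0 := norm_ne_zero_iff.mpr hx
  have hr : (0:ℝ) < ‖x‖ := norm_pos_iff.mpr hx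
  have N := hasFDerivAt_norm' x hx
  have hφ' : ContDiffOn ℝ (⊤ : ℕ∞) (deriv φ) (Ioi 0) := hφ.deriv_of_isOpen isOpen_Ioi (by simp)
  have hφd : HasDerivAt φ (deriv φ ‖x‖) ‖x‖ :=
    ((hφ.contDiffAt (Ioi_mem_nhds hr)).differentiableAt (by simp)).hasDerivAt
  have hφdd : HasDerivAt (deriv φ) (deriv (deriv φ) ‖x‖) ‖x‖ :=
    ((hφ'.contDiffAt (Ioi_mem_nhds hr)).differentiableAt (by simp)).hasDerivAt
  have hηd : HasDerivAt η (deriv η ‖x‖) ‖x‖ :=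
    ((hη.contDiffAt (Ioi_mem_nhds hr)).differentiableAt (by simp)).hasDerivAt
  -- 1-d derivative facts
  have hA := (hηd.mul hφd).div (hasDerivAt_id' ‖x‖) hn
  have hB := hηd.mul ((hφdd.div (hasDerivAt_pow 2 ‖x‖) (pow_ne_zero 2 hn)).sub
    (hφd.div (hasDerivAt_pow 3 ‖x‖) (pow_ne_zero 3 hn)))
  -- lift to E 2
  have hAfull : HasFDerivAt (fun y : E 2 => η ‖y‖ * φ ‖y‖ / ‖y‖) _ x :=
    hA.comp_hasFDerivAt x N
  have hBfull : HasFDerivAt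
      (fun y : E 2 => η ‖y‖ * (deriv φ ‖y‖ / ‖y‖ ^ 2 - φ ‖y‖ / ‖y‖ ^ 3)) _ x :=
    hB.comp_hasFDerivAt x N
  have hp0 : HasFDerivAt (fun z : E 2 => z 0) (EuclideanSpace.proj (𝕜 := ℝ) 0) x :=
    (EuclideanSpace.proj 0 : E 2 →L[ℝ] ℝ).hasFDerivAt
  have hp1 : HasFDerivAt (fun z : E 2 => z 1) (EuclideanSpace.proj (𝕜 := ℝ) 1) x :=
    (EuclideanSpace.proj 1 : E 2 →L[ℝ] ℝ).hasFDerivAt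
  have hG0 : HasFDerivAt (fun y : E 2 => η ‖y‖ * φ ‖y‖ / ‖y‖ +
      y 1 * (y 1 * (η ‖y‖ * (deriv φ ‖y‖ / ‖y‖ ^ 2 - φ ‖y‖ / ‖y‖ ^ 3)))) _ x :=
    hAfull.add (hp1.mul (hp1.mul hBfull))
  have hG1 : HasFDerivAt (fun y : E 2 => -(y 0 *
      (y 1 * (η ‖y‖ * (deriv φ ‖y‖ / ‖y‖ ^ 2 - φ ‖y‖ / ‖y‖ ^ 3))))) _ x :=
    (hp0.mul (hp1.mul hBfull)).neg
  -- eventual equalities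
  have hev : ∀ᶠ y in nhds x, y ≠ (0 : E 2) := isOpen_compl_singleton.mem_nhds hx
  have hev0 : (fun y : E 2 => ∑ j, η ‖y‖ * ((!![(0:ℝ), 1; -1, 0]) 0 j) *
        pd j (fun z : E 2 => φ ‖z‖ * (z 1 / ‖z‖)) y) =ᶠ[nhds x]
      (fun y : E 2 => η ‖y‖ * φ ‖y‖ / ‖y‖ +
        y 1 * (y 1 * (η ‖y‖ * (deriv φ ‖y‖ / ‖y‖ ^ 2 - φ ‖y‖ / ‖y‖ ^ 3)))) := by
    filter_upwards [hev] with y hy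
    have hny : ‖y‖ ≠ 0 := norm_ne_zero_iff.mpr hy
    rw [Fin.sum_univ_two, pdf_formula φ hφ y hy 0, pdf_formula φ hφ y hy 1]
    norm_num [es, EuclideanSpace.single_apply]
    field_simp
    ring
  have hev1 : (fun y : E 2 => ∑ j, η ‖y‖ * ((!![(0:ℝ), 1; -1, 0]) 1 j) *
        pd j (fun z : E 2 => φ ‖z‖ * (z 1 / ‖z‖)) y) =ᶠ[nhds x]
      (fun y : E 2 => -(y 0 *
        (y 1 * (η ‖y‖ * (deriv φ ‖y‖ / ‖y‖ ^ 2 - φ ‖y‖ / ‖y‖ ^ 3))))) := by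
    filter_upwards [hev] with y hy
    have hny : ‖y‖ ≠ 0 := norm_ne_zero_iff.mpr hy
    rw [Fin.sum_univ_two, pdf_formula φ hφ y hy 0, pdf_formula φ hφ y hy 1]
    norm_num [es, EuclideanSpace.single_apply]
    field_simp
  have hF0 := hG0.congr_of_eventuallyEq hev0
  have hF1 := hG1.congr_of_eventuallyEq hev1
  rw [Fin.sum_univ_two, pd, pd, hF0.fderiv, hF1.fderiv]
  have hinner0 : innerSL ℝ x (es (0 : Fin 2)) = x 0 := by
    simp [es, EuclideanSpace.inner_single_right, real_inner_comm]
  have hinner1 : innerSL ℝ x (es (1 : Fin 2)) = x 1 := by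
    simp [es, EuclideanSpace.inner_single_right, real_inner_comm]
  have hproj00 : (EuclideanSpace.proj (𝕜 := ℝ) (0 : Fin 2)) (es (0 : Fin 2)) = 1 := by
    show (es (0 : Fin 2)) 0 = 1; simp [es]
  have hproj10 : (EuclideanSpace.proj (𝕜 := ℝ) (1 : Fin 2)) (es (0 : Fin 2)) = 0 := by
    show (es (0 : Fin 2)) 1 = 0; simp [es, EuclideanSpace.single_apply]
  have hproj01 : (EuclideanSpace.proj (𝕜 := ℝ) (0 : Fin 2)) (es (1 : Fin 2)) = 0 := by
    show (es (1 : Fin 2)) 0 = 0; simp [es, EuclideanSpace.single_apply]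
  have hproj11 : (EuclideanSpace.proj (𝕜 := ℝ) (1 : Fin 2)) (es (1 : Fin 2)) = 1 := by
    show (es (1 : Fin 2)) 1 = 1; simp [es]
  simp only [ContinuousLinearMap.add_apply, ContinuousLinearMap.smul_apply,
    ContinuousLinearMap.neg_apply, ContinuousLinearMap.coe_smul', Pi.smul_apply,
    ContinuousLinearMap.sub_apply, innerSL_apply_apply, smul_eq_mul, hinner0, hinner1,
    hproj00, hproj10, hproj01, hproj11, Pi.mul_apply]
  field_simp
  ring
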